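/- arXiv:1708.01753 — 3 statements merged into one kernel-verified Lean document; each statement's English description precedes it below -/
import Mathlib

section
/- For the diagonal torus T of Aut(NF_n) consisting of diagonal maps e_i ↦ α^i e_i (α ≠ 0), the normalizer of T in Aut(NF_n) equals T itself. -/
/-- The bracket of the null-filiform Leibniz algebra `NF_n` on `Fin n → ℂ`
(0-indexed basis: `[e i, e 0] = e (i+1)`, all other basis products zero). -/
def nfBr (n : ℕ) (x y : Fin n → ℂ) : Fin n → ℂ :=
  fun k => if _ : (k : ℕ) = 0 then 0
    else y ⟨0, k.pos⟩ * x ⟨(k : ℕ) - 1, Nat.lt_of_le_of_lt (Nat.sub_le _ _) k.isLt⟩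

/-- Membership in the diagonal torus `T = {diag(α, α², …, αⁿ) : α ≠ 0}`. -/
def nfTorus (n : ℕ) (M : (Fin n → ℂ) ≃ₗ[ℂ] (Fin n → ℂ)) : Prop :=
  ∃ α : ℂ, α ≠ 0 ∧ ∀ v : Fin n → ℂ, ∀ i : Fin n, M v i = α ^ ((i : ℕ) + 1) * v i

/-!
Conjugating `diag(2, 4, …, 2ⁿ)` by `M` gives some `diag(γ, γ², …, γⁿ)`, so `M e₀` is an eigenvector
of the latter with eigenvalue `2`. Its `e₀`-coordinate `a` cannot vanish (otherwise `M e₁ = [M e₀, M e₀] = 0`, or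
`M e₀ = 0` if `n = 1`), hence `γ = 2`, and since `2^(i+1) ≠ 2` for `i ≠ 0`, `M e₀ = a e₀`. As `e₀` generates `NF_n`
(`e_{k+1} = [e_k, e₀]`), this forces `M e_k = a^(k+1) e_k` for every `k`.
-/

section

variable {n : ℕ}

theorem nfBr_smul_smul (c d : ℂ) (x y : Fin n → ℂ) :
    nfBr n (c • x) (d • y) = (c * d) • nfBr n x y := by
  funext k
  simp only [nfBr, Pi.smul_apply, smul_eq_mul]
  split_ifs
  · simp
  · ring

theorem two_pow_succ_ne_two {i : ℕ} (hi : i ≠ 0) : (2 : ℂ) ^ (i + 1) ≠ 2 := by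
  have : (2 : ℕ) ^ 1 < 2 ^ (i + 1) := Nat.pow_lt_pow_right one_lt_two (by omega)
  exact_mod_cast this.ne'

noncomputable def nfTorusElt (n : ℕ) {α : ℂ} (hα : α ≠ 0) : (Fin n → ℂ) ≃ₗ[ℂ] (Fin n → ℂ) :=
  LinearEquiv.piCongrRight fun i =>
    LinearEquiv.smulOfNeZero ℂ ℂ (α ^ ((i : ℕ) + 1)) (pow_ne_zero _ hα)

theorem nfTorusElt_apply {α : ℂ} (hα : α ≠ 0) (v : Fin n → ℂ) (i : Fin n) :
    nfTorusElt n hα v i = α ^ ((i : ℕ) + 1) * v i :=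
  rfl

theorem nfTorus_nfTorusElt {α : ℂ} (hα : α ≠ 0) : nfTorus n (nfTorusElt n hα) :=
  ⟨α, hα, nfTorusElt_apply hα⟩

theorem nfTorusElt_single {α : ℂ} (hα : α ≠ 0) (i : Fin n) (c : ℂ) :
    nfTorusElt n hα (Pi.single i c) = α ^ ((i : ℕ) + 1) • Pi.single i c := by
  funext j
  rw [nfTorusElt_apply, Pi.smul_apply, smul_eq_mul]
  rcases eq_or_ne j i with rfl | hj
  · rfl
  · simp [hj]

variable [NeZero n]

theorem nfBr_eq_zero_of_apply_zero (x : Fin n → ℂ) {y : Fin n → ℂ} (hy : y 0 = 0) :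
    nfBr n x y = 0 := by
  funext k
  simp only [nfBr, Pi.zero_apply]
  split_ifs
  · rfl
  · exact mul_eq_zero_of_left hy _

theorem nfBr_single_single_zero {k : ℕ} (hk : k + 1 < n) :
    nfBr n (Pi.single ⟨k, by omega⟩ 1) (Pi.single 0 1) = Pi.single ⟨k + 1, hk⟩ 1 := by
  funext j
  simp only [nfBr, Pi.single_apply, Fin.ext_iff, Fin.val_zero, if_true, one_mul]
  split_ifs <;> first | rfl | omega

theorem map_single_zero_apply_zero_ne_zero (M : (Fin n → ℂ) ≃ₗ[ℂ] (Fin n → ℂ))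
    (hM : ∀ x y, M (nfBr n x y) = nfBr n (M x) (M y)) : M (Pi.single 0 1) 0 ≠ 0 := by
  intro h0
  rcases Nat.lt_or_ge n 2 with hn | hn
  · have : M (Pi.single 0 1) = 0 := funext fun i => by
      rwa [show i = 0 from Fin.ext (by simp only [Fin.val_zero]; omega)]
    simpa using congrFun ((LinearEquiv.map_eq_zero_iff M).mp this) 0
  · have : M (Pi.single ⟨1, hn⟩ 1) = 0 := by
      rw [← nfBr_single_single_zero hn, hM]
      exact nfBr_eq_zero_of_apply_zero _ h0
    simpa using congrFun ((LinearEquiv.map_eq_zero_iff M).mp this) ⟨1, hn⟩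

theorem map_single_zero_eq_smul_of_normalizes (M : (Fin n → ℂ) ≃ₗ[ℂ] (Fin n → ℂ))
    (hM : ∀ x y, M (nfBr n x y) = nfBr n (M x) (M y))
    (hnorm : ∀ T : (Fin n → ℂ) ≃ₗ[ℂ] (Fin n → ℂ), nfTorus n T →
      nfTorus n ((M.symm.trans T).trans M)) :
    M (Pi.single 0 1) = M (Pi.single 0 1) 0 • Pi.single 0 1 := by
  set a := M (Pi.single 0 1) 0
  have ha : a ≠ 0 := map_single_zero_apply_zero_ne_zero M hM
  obtain ⟨γ, -, hγ⟩ := hnorm _ (nfTorus_nfTorusElt (n := n) two_ne_zero)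
  have eigen : ∀ i : Fin n,
      2 * M (Pi.single 0 1) i = γ ^ ((i : ℕ) + 1) * M (Pi.single 0 1) i := fun i => by
    simpa only [LinearEquiv.trans_apply, LinearEquiv.symm_apply_apply, nfTorusElt_single,
      Fin.val_zero, zero_add, pow_one, map_smul, Pi.smul_apply, smul_eq_mul]
      using hγ (M (Pi.single 0 1)) i
  have hγ2 : γ = 2 := by
    have := eigen 0
    simp only [Fin.val_zero, zero_add, pow_one] at this
    exact (mul_right_cancel₀ ha this).symm
  funext i
  rcases eq_or_ne i 0 with rfl | hi
  · simp [a]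
  · have := eigen i
    rw [hγ2] at this
    have hMi : M (Pi.single 0 1) i = 0 :=
      (mul_eq_mul_right_iff.mp this).resolve_left
        (two_pow_succ_ne_two (Fin.val_ne_zero_iff.mpr hi)).symm
    simp [hMi, hi]

theorem apply_eq_pow_mul_of_map_single_zero (M : (Fin n → ℂ) →ₗ[ℂ] (Fin n → ℂ))
    (hM : ∀ x y, M (nfBr n x y) = nfBr n (M x) (M y)) {a : ℂ}
    (h0 : M (Pi.single 0 1) = a • Pi.single 0 1) (v : Fin n → ℂ) (i : Fin n) :
    M v i = a ^ ((i : ℕ) + 1) * v i := by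
  have hsingle : ∀ k (hk : k < n),
      M (Pi.single ⟨k, hk⟩ 1) = a ^ (k + 1) • Pi.single ⟨k, hk⟩ 1 := by
    intro k
    induction k with
    | zero => intro hk; simpa using h0
    | succ k ih =>
      intro hk
      rw [← nfBr_single_single_zero hk, hM, ih (by omega), h0, nfBr_smul_smul, ← pow_succ]
  have hdiag : M = LinearMap.mulLeft ℂ fun i : Fin n => a ^ ((i : ℕ) + 1) := by
    refine LinearMap.pi_ext' fun j => LinearMap.ext_ring ?_
    simp only [LinearMap.comp_apply, LinearMap.coe_single]
    rw [← Fin.eta j j.isLt, hsingle]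
    ext k
    rcases eq_or_ne k j with rfl | hk <;> simp [*]
  rw [hdiag]
  rfl

end

/-- The normalizer of the maximal torus in `Aut(NF_n)` is the torus itself. -/
theorem nf_normalizer_torus (n : ℕ) (M : (Fin n → ℂ) ≃ₗ[ℂ] (Fin n → ℂ))
    (hM : ∀ x y, M (nfBr n x y) = nfBr n (M x) (M y))
    (hnorm : ∀ T : (Fin n → ℂ) ≃ₗ[ℂ] (Fin n → ℂ), nfTorus n T →
      nfTorus n ((M.symm.trans T).trans M)) :
    nfTorus n M := by
  rcases n.eq_zero_or_pos with rfl | hn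
  · exact ⟨1, one_ne_zero, fun _ i => i.elim0⟩
  have : NeZero n := ⟨hn.ne'⟩
  exact ⟨_, map_single_zero_apply_zero_ne_zero M hM,
    apply_eq_pow_mul_of_map_single_zero M.toLinearMap hM
      (map_single_zero_eq_smul_of_normalizes M hM hnorm)⟩
end

section
/- For any i with 1 < i < n, the decomposition NF_n = ⊕_{k∈ℤ/iℤ} A_k with A_k = span{e_j : j ≡ k mod i, 1 ≤ j ≤ n} is a ℤ/iℤ-grading of NF_n. -/
/-- Homogeneous components of the `ℤ/iℤ`-grading:
`A k = span{e_j : j ≡ k mod i}` (1-based indices `j`). -/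
noncomputable def nfZModComp (n i : ℕ) (k : ZMod i) : Submodule ℂ (Fin n → ℂ) :=
  Submodule.span ℂ
    {v | ∃ j : Fin n, (((j : ℕ) + 1 : ℕ) : ZMod i) = k ∧ v = Pi.single j (1 : ℂ)}

/-!
The components are the spans of the fibres of a degree function on the standard basis, hence
independent and spanning, and the only nonzero products `[e_j, e_1] = e_{j+1}` add degrees.
-/

open Submodule

section Fibres

variable {ι R M G : Type*} [Ring R] [AddCommGroup M] [Module R M]

theorem LinearIndependent.iSupIndep_span_image_fiber {v : ι → M} (hv : LinearIndependent R v)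
    (d : ι → G) : iSupIndep fun g => span R (v '' (d ⁻¹' {g})) := fun _ =>
  (hv.disjoint_span_image disjoint_compl_right).mono_right <|
    iSup₂_le fun _ hne => span_mono <| Set.image_mono fun _ hj hg =>
      hne ((Set.mem_singleton_iff.1 hj).symm.trans hg)

theorem Module.Basis.iSup_span_image_fiber (b : Basis ι R M) (d : ι → G) :
    ⨆ g, span R (b '' (d ⁻¹' {g})) = ⊤ :=
  eq_top_iff.2 <| b.span_eq.ge.trans <| span_le.2 <| Set.range_subset_iff.2 fun j =>
    mem_iSup_of_mem (d j) (subset_span ⟨j, rfl, rfl⟩)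

theorem Module.Basis.isInternal_span_image_fiber [DecidableEq G] (b : Basis ι R M) (d : ι → G) :
    DirectSum.IsInternal fun g => span R (b '' (d ⁻¹' {g})) :=
  DirectSum.isInternal_submodule_of_iSupIndep_of_iSup_eq_top
    (b.linearIndependent.iSupIndep_span_image_fiber d) (b.iSup_span_image_fiber d)

end Fibres

/-- The degree of `Pi.single j 1`, which is the paper's `e_{j+1}`. -/
def nfDeg (i : ℕ) {n : ℕ} (j : Fin n) : ZMod i := (((j : ℕ) + 1 : ℕ) : ZMod i)

theorem nfZModComp_eq_span (n i : ℕ) (k : ZMod i) :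
    nfZModComp n i k = span ℂ (Pi.basisFun ℂ (Fin n) '' (nfDeg i ⁻¹' {k})) := by
  unfold nfZModComp
  congr 1
  ext v
  simp only [Set.mem_ofPred_eq, Set.mem_image, Set.mem_preimage, Set.mem_singleton_iff,
    Pi.basisFun_apply, nfDeg, eq_comm (a := v)]

theorem mem_nfZModComp {n i : ℕ} {k : ZMod i} {x : Fin n → ℂ} :
    x ∈ nfZModComp n i k ↔ ∀ j, nfDeg i j ≠ k → x j = 0 := by
  rw [nfZModComp_eq_span]
  exact Pi.mem_spanSubset_iff

theorem nfDeg_eq_pred_add_one {n i : ℕ} (k : Fin n) (hk : (k : ℕ) ≠ 0) :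
    nfDeg i k = nfDeg i (⟨(k : ℕ) - 1, by omega⟩ : Fin n) + nfDeg i (⟨0, k.pos⟩ : Fin n) := by
  simp only [nfDeg, Nat.sub_add_cancel (Nat.pos_of_ne_zero hk), zero_add, Nat.cast_one]
  push_cast
  ring

theorem nfBr_mem_nfZModComp {n i : ℕ} {g h : ZMod i} {x y : Fin n → ℂ}
    (hx : x ∈ nfZModComp n i g) (hy : y ∈ nfZModComp n i h) :
    nfBr n x y ∈ nfZModComp n i (g + h) := by
  rw [mem_nfZModComp] at hx hy ⊢
  intro k hk
  unfold nfBr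
  split_ifs with hk0
  · rfl
  by_cases hy0 : nfDeg i (⟨0, k.pos⟩ : Fin n) = h
  · refine mul_eq_zero_of_right _ (hx _ fun hg => hk ?_)
    rw [nfDeg_eq_pred_add_one k hk0, hg, hy0]
  · exact mul_eq_zero_of_left (hy _ hy0) _

theorem nf_ZMod_grading_general (n i : ℕ) :
    DirectSum.IsInternal (nfZModComp n i) ∧
    ∀ g h : ZMod i, ∀ x ∈ nfZModComp n i g, ∀ y ∈ nfZModComp n i h,
      nfBr n x y ∈ nfZModComp n i (g + h) := by
  refine ⟨?_, fun g h x hx y hy => nfBr_mem_nfZModComp hx hy⟩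
  rw [funext (nfZModComp_eq_span n i)]
  exact (Pi.basisFun ℂ (Fin n)).isInternal_span_image_fiber (nfDeg i)

/-- For `1 < i < n`, the decomposition by residues mod `i` is a `ℤ/iℤ`-grading
of `NF_n`. -/
theorem nf_ZMod_grading (n i : ℕ) (h1 : 1 < i) (h2 : i < n) :
    DirectSum.IsInternal (nfZModComp n i) ∧
    ∀ g h : ZMod i, ∀ x ∈ nfZModComp n i g, ∀ y ∈ nfZModComp n i h,
      nfBr n x y ∈ nfZModComp n i (g + h) :=
  nf_ZMod_grading_general n i
end

section
/- Let G be an abelian group and NF_n = ⊕_{g∈G} A_g a G-grading with e_1 ∈ A_x, and suppose x has order i > n in G (or infinite order). Then A_{jx} = span{e_j} for 1 ≤ j ≤ n and A_g = 0 for all other g, so the grading is equivalent to the ℤ-grading with e_j in degree j. -/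
open Function Set Submodule

theorem nsmul_injOn_Iic_of_nsmul_ne_zero {G : Type*} [AddLeftCancelMonoid G] {x : G} {n : ℕ}
    (hx : ∀ m : ℕ, 0 < m → m ≤ n → m • x ≠ 0) : InjOn (· • x) (Iic n) := by
  intro a ha b hb hab
  have hmod := nsmul_inj_mod.mp hab
  rcases Nat.eq_zero_or_pos (addOrderOf x) with h0 | hpos
  · simpa [h0] using hmod
  · have hlt : n < addOrderOf x :=
      not_le.mp fun hle => hx _ hpos hle (addOrderOf_nsmul_eq_zero x)
    rwa [Nat.mod_eq_of_lt (lt_of_le_of_lt ha hlt), Nat.mod_eq_of_lt (lt_of_le_of_lt hb hlt)] at hmod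

namespace iSupIndep

variable {ι κ R M : Type*} [Ring R] [AddCommGroup M] [Module R M] {A : ι → Submodule R M}
  {v : κ → M} {d : κ → ι}

theorem eq_span_image_preimage (hA : iSupIndep A) (hv : span R (range v) = ⊤)
    (hmem : ∀ k, v k ∈ A (d k)) (g : ι) : A g = span R (v '' (d ⁻¹' {g})) := by
  set S := span R (v '' (d ⁻¹' {g}))
  set T := span R (v '' (d ⁻¹' {g})ᶜ)
  have hSA : S ≤ A g := span_le.mpr <| by
    rintro _ ⟨k, hk, rfl⟩
    exact (mem_singleton_iff.mp hk) ▸ hmem k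
  have hT : T ≤ ⨆ (h : ι) (_ : h ≠ g), A h := span_le.mpr <| by
    rintro _ ⟨k, hk, rfl⟩
    exact mem_iSup_of_mem (d k) (mem_iSup_of_mem hk (hmem k))
  have hST : S ⊔ T = ⊤ := by
    rw [← span_union, ← image_union, union_compl_self, image_univ, hv]
  have hTA : T ⊓ A g = ⊥ := disjoint_iff.mp ((hA g).symm.mono_left hT)
  calc A g = (S ⊔ T) ⊓ A g := by rw [hST, top_inf_eq]
    _ = S := by rw [sup_inf_assoc_of_le T hSA, hTA, sup_bot_eq]

theorem eq_span_singleton (hA : iSupIndep A) (hv : span R (range v) = ⊤)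
    (hmem : ∀ k, v k ∈ A (d k)) (hd : Injective d) (k : κ) : A (d k) = span R {v k} := by
  rw [hA.eq_span_image_preimage hv hmem, ← image_singleton (f := d), hd.preimage_image,
    image_singleton]

theorem eq_bot_of_notMem_range (hA : iSupIndep A) (hv : span R (range v) = ⊤)
    (hmem : ∀ k, v k ∈ A (d k)) {g : ι} (hg : g ∉ range d) : A g = ⊥ := by
  rw [hA.eq_span_image_preimage hv hmem, preimage_singleton_eq_empty.mpr hg, image_empty,
    span_empty]

end iSupIndep

theorem nfBr_single_single {n m : ℕ} (h : m + 1 < n) (a b : ℂ) :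
    nfBr n (Pi.single ⟨m, by omega⟩ a) (Pi.single ⟨0, by omega⟩ b) =
      Pi.single ⟨m + 1, h⟩ (b * a) := by
  funext k
  by_cases hk : (k : ℕ) = 0
  · have hk' : k ≠ ⟨m + 1, h⟩ := fun e => by simp [e] at hk
    simp [nfBr, hk, hk']
  · have hiff : (k : ℕ) - 1 = m ↔ (k : ℕ) = m + 1 := by omega
    simp [nfBr, hk, Pi.single_apply, Fin.ext_iff, hiff]

theorem single_mem_nsmul_of_isGrading {n : ℕ} {G : Type*} [AddMonoid G]
    {A : G → Submodule ℂ (Fin n → ℂ)}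
    (hgr : ∀ g h : G, ∀ u ∈ A g, ∀ v ∈ A h, nfBr n u v ∈ A (g + h))
    {x : G} (hn : 0 < n) (he1 : Pi.single ⟨0, hn⟩ (1 : ℂ) ∈ A x) (j : Fin n) :
    Pi.single j (1 : ℂ) ∈ A (((j : ℕ) + 1) • x) := by
  obtain ⟨m, hm⟩ := j
  induction m with
  | zero => simpa using he1
  | succ m ih =>
    have hbr := hgr _ _ _ (ih (by omega)) _ he1
    rwa [nfBr_single_single hm, mul_one, ← succ_nsmul] at hbr

/-- If `e_1` is homogeneous of degree `x` and the order of `x` exceeds `n`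
(or is infinite), the grading is the `ℤ`-grading: `A_{jx} = ⟨e_j⟩` and all
other components vanish. -/
theorem nf_grading_large_order (n : ℕ) (G : Type*) [AddCommGroup G] [DecidableEq G]
    (A : G → Submodule ℂ (Fin n → ℂ)) (hint : DirectSum.IsInternal A)
    (hgr : ∀ g h : G, ∀ u ∈ A g, ∀ v ∈ A h, nfBr n u v ∈ A (g + h))
    (x : G) (hn : 1 ≤ n) (he1 : (Pi.single (⟨0, by omega⟩ : Fin n) (1 : ℂ)) ∈ A x)
    (hord : ∀ m : ℕ, 0 < m → m ≤ n → m • x ≠ 0) :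
    (∀ j : Fin n, A (((j : ℕ) + 1) • x) =
        Submodule.span ℂ {(Pi.single j (1 : ℂ) : Fin n → ℂ)}) ∧
    (∀ g : G, (∀ j : Fin n, g ≠ ((j : ℕ) + 1) • x) → A g = ⊥) := by
  have hmem := single_mem_nsmul_of_isGrading hgr hn he1
  have hdeg : Injective fun j : Fin n => ((j : ℕ) + 1) • x := fun j k hjk =>
    Fin.ext <| Nat.succ_injective <|
      nsmul_injOn_Iic_of_nsmul_ne_zero hord (mem_Iic.mpr j.isLt) (mem_Iic.mpr k.isLt) hjk
  have hspan : span ℂ (range fun j : Fin n => (Pi.single j (1 : ℂ) : Fin n → ℂ)) = ⊤ := by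
    convert (Pi.basisFun ℂ (Fin n)).span_eq
    simp
  have hA := hint.submodule_iSupIndep
  refine ⟨hA.eq_span_singleton hspan hmem hdeg, fun g hg => ?_⟩
  refine hA.eq_bot_of_notMem_range hspan hmem ?_
  rintro ⟨j, rfl⟩
  exact hg j rfl
end
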